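/- Let C = {P^C_i}_{i=1}^{r} be a projective observable on ℂ^d consisting of r nonzero mutually orthogonal projections summing to the identity. Then the fidelity-based maximal disturbance of C equals 1 − 1/r; that is, sup over density matrices ρ of [1 − F(E^C(ρ), ρ)²] = 1 − 1/r, the supremum being attained at a pure state ψ with ⟨ψ, P^C_i ψ⟩ = 1/r for every i. -/

import Mathlib

open scoped BigOperators ComplexOrder
open Matrix

noncomputable section

/-- A projective observable: a finite family of mutually orthogonal
self-adjoint idempotents summing to the identity. -/
def IsProjObs {d r : ℕ} (P : Fin r → Matrix (Fin d) (Fin d) ℂ) : Prop :=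
  (∀ i, (P i).IsHermitian) ∧ (∀ i, P i * P i = P i) ∧
    (∀ i k, i ≠ k → P i * P k = 0) ∧ (∑ i, P i = 1)

/-- A density matrix: positive semidefinite with unit trace. -/
def IsDensity {d : ℕ} (ρ : Matrix (Fin d) (Fin d) ℂ) : Prop :=
  ρ.PosSemidef ∧ ρ.trace = 1

/-- The measurement channel `E^A(ρ) = Σ_i P_i ρ P_i` of a projective observable. -/
def measChannel {d r : ℕ} (P : Fin r → Matrix (Fin d) (Fin d) ℂ)
    (ρ : Matrix (Fin d) (Fin d) ℂ) : Matrix (Fin d) (Fin d) ℂ :=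
  ∑ i, P i * ρ * P i

/-- `p^B_ρ(j) = tr(P^B_j ρ)`. -/
def probB {d rB : ℕ} (Q : Fin rB → Matrix (Fin d) (Fin d) ℂ)
    (ρ : Matrix (Fin d) (Fin d) ℂ) (j : Fin rB) : ℝ :=
  ((Q j * ρ).trace).re

/-- `q^{A→B}_ρ(j) = tr(P^B_j Σ_i P^A_i ρ P^A_i)`. -/
def probAB {d rA rB : ℕ} (P : Fin rA → Matrix (Fin d) (Fin d) ℂ)
    (Q : Fin rB → Matrix (Fin d) (Fin d) ℂ)
    (ρ : Matrix (Fin d) (Fin d) ℂ) (j : Fin rB) : ℝ :=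
  ((Q j * measChannel P ρ).trace).re

open Classical in
/-- The positive semidefinite square root of a PSD matrix (junk value `0` otherwise). -/
noncomputable def msqrt {d : ℕ} (A : Matrix (Fin d) (Fin d) ℂ) :
    Matrix (Fin d) (Fin d) ℂ :=
  if h : A.PosSemidef then
    (h.1.eigenvectorUnitary : Matrix (Fin d) (Fin d) ℂ) *
      diagonal ((↑) ∘ Real.sqrt ∘ h.1.eigenvalues) *
      (star (h.1.eigenvectorUnitary : Matrix (Fin d) (Fin d) ℂ))
  else 0

/-- `|X| = √(Xᴴ X)`, the positive semidefinite absolute value of a matrix. -/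
noncomputable def matAbs {d : ℕ} (X : Matrix (Fin d) (Fin d) ℂ) :
    Matrix (Fin d) (Fin d) ℂ :=
  msqrt (Xᴴ * X)

/-- The quantum fidelity `F(ρ,σ) = tr √(√ρ σ √ρ)`. -/
noncomputable def qFid {d : ℕ} (ρ σ : Matrix (Fin d) (Fin d) ℂ) : ℝ :=
  ((msqrt (msqrt ρ * σ * msqrt ρ)).trace).re

/-- Variational distance `D_1(p,q) = (1/2) Σ_j |p_j − q_j|`. -/
def distL1 {rB : ℕ} (p q : Fin rB → ℝ) : ℝ := (1 / 2) * ∑ j, |p j - q j|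

/-- Chebyshev distance `D_∞(p,q) = max_j |p_j − q_j|`. -/
noncomputable def distLinf {rB : ℕ} (p q : Fin rB → ℝ) : ℝ := ⨆ j, |p j - q j|

/-- Classical fidelity `F(p,q) = Σ_j √(p_j q_j)`. -/
noncomputable def classFid {rB : ℕ} (p q : Fin rB → ℝ) : ℝ :=
  ∑ j, Real.sqrt (p j * q j)

/-- `Q_1(A→B)`. -/
noncomputable def Q1 {d rA rB : ℕ} (P : Fin rA → Matrix (Fin d) (Fin d) ℂ)
    (Q : Fin rB → Matrix (Fin d) (Fin d) ℂ) : ℝ :=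
  sSup {x : ℝ | ∃ ρ, IsDensity ρ ∧ x = distL1 (probAB P Q ρ) (probB Q ρ)}

/-- `Q_∞(A→B)`. -/
noncomputable def Qinf {d rA rB : ℕ} (P : Fin rA → Matrix (Fin d) (Fin d) ℂ)
    (Q : Fin rB → Matrix (Fin d) (Fin d) ℂ) : ℝ :=
  sSup {x : ℝ | ∃ ρ, IsDensity ρ ∧ x = distLinf (probAB P Q ρ) (probB Q ρ)}

/-- `Q_F(A→B)`. -/
noncomputable def QF {d rA rB : ℕ} (P : Fin rA → Matrix (Fin d) (Fin d) ℂ)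
    (Q : Fin rB → Matrix (Fin d) (Fin d) ℂ) : ℝ :=
  sSup {x : ℝ | ∃ ρ, IsDensity ρ ∧
    x = 1 - (classFid (probAB P Q ρ) (probB Q ρ)) ^ 2}

/-- The rank-one projection `|v⟩⟨v|` onto a (unit) vector `v`. -/
def proj {d : ℕ} (v : Fin d → ℂ) : Matrix (Fin d) (Fin d) ℂ :=
  Matrix.vecMulVec v (star v)


/-! Pinching gives `ρ ≤ r • E(ρ)`, and the square root is operator monotone, so
`√ρ ≤ √r • √E(ρ)`. Hence `1 = tr ρ ≤ √r · Re tr(√ρ √E(ρ)) ≤ √r · tr |√ρ √E(ρ)| = √r · F(E(ρ), ρ)`,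
the last inequality being `Re tr X ≤ tr |X|` (Cauchy–Schwarz in an eigenbasis of `Xᴴ X`).
Equality is attained at `ψ = r^{-1/2} Σ_i u_i` with unit vectors `u_i ∈ ran P_i`: for a pure state
`F(σ, |ψ⟩⟨ψ|)² = ⟨ψ, σ ψ⟩`, and `⟨ψ, E(|ψ⟩⟨ψ|) ψ⟩ = Σ_i ⟨ψ, P_i ψ⟩² = r · r⁻²`. -/

-- The operator norm makes square matrices a C⋆-algebra, where `CFC.sqrt` is operator monotone.
open scoped MatrixOrder Matrix.Norms.L2Operator

section TraceInequality

variable {n : Type*} [Fintype n] [DecidableEq n]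

theorem msqrt_eq_sqrt {d : ℕ} (A : Matrix (Fin d) (Fin d) ℂ) : msqrt A = CFC.sqrt A := by
  by_cases hA : A.PosSemidef
  · rw [msqrt, dif_pos hA, CFC.sqrt_eq_cfc, cfc_nnreal_eq_real _ A hA.nonneg, hA.1.cfc_eq,
      IsHermitian.cfc, Unitary.conjStarAlgAut_apply]
    congr 3
    funext i
    simp [max_eq_left (hA.eigenvalues_nonneg i)]
  · rw [msqrt, dif_neg hA, CFC.sqrt, cfcₙ_apply_of_not_predicate]
    rwa [nonneg_iff_posSemidef]

theorem trace_msqrt {d : ℕ} {B : Matrix (Fin d) (Fin d) ℂ} (hB : B.PosSemidef) :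
    (msqrt B).trace = ∑ j, (√(hB.1.eigenvalues j) : ℂ) := by
  rw [msqrt, dif_pos hB, trace_mul_cycle, Unitary.coe_star_mul_self, one_mul, trace_diagonal]
  rfl

theorem Matrix.IsHermitian.trace_eq_sum_dotProduct_eigenvectorBasis {B : Matrix n n ℂ}
    (hB : B.IsHermitian) (X : Matrix n n ℂ) :
    X.trace = ∑ j, star ⇑(hB.eigenvectorBasis j) ⬝ᵥ (X *ᵥ ⇑(hB.eigenvectorBasis j)) := by
  set U := (hB.eigenvectorUnitary : Matrix n n ℂ)
  calc X.trace = (star U * X * U).trace := by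
        rw [trace_mul_cycle, mem_unitaryGroup_iff.mp hB.eigenvectorUnitary.2, one_mul]
    _ = _ := by
        simp only [trace, diag, mul_apply, dotProduct, mulVec, Finset.sum_mul, Finset.mul_sum]
        refine Finset.sum_congr rfl fun j _ => Finset.sum_comm.trans ?_
        simp [U, mul_assoc]

theorem re_dotProduct_mulVec_eigenvectorBasis_le (X : Matrix n n ℂ) (j : n) :
    (star ⇑((isHermitian_conjTranspose_mul_self X).eigenvectorBasis j) ⬝ᵥ
        (X *ᵥ ⇑((isHermitian_conjTranspose_mul_self X).eigenvectorBasis j))).re ≤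
      √((isHermitian_conjTranspose_mul_self X).eigenvalues j) := by
  set hB := isHermitian_conjTranspose_mul_self X
  set v := hB.eigenvectorBasis j
  have hXv : ‖WithLp.toLp 2 (X *ᵥ ⇑v)‖ = √(hB.eigenvalues j) := by
    rw [norm_eq_sqrt_re_inner (𝕜 := ℂ), hB.eigenvalues_eq, EuclideanSpace.inner_eq_star_dotProduct,
      dotProduct_comm, ← mulVec_mulVec, dotProduct_mulVec _ Xᴴ, ← star_mulVec]
  calc _ = RCLike.re (inner ℂ v (WithLp.toLp 2 (X *ᵥ ⇑v))) := by
        rw [EuclideanSpace.inner_eq_star_dotProduct, dotProduct_comm]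
        rfl
    _ ≤ ‖v‖ * ‖WithLp.toLp 2 (X *ᵥ ⇑v)‖ := re_inner_le_norm _ _
    _ = _ := by rw [hB.eigenvectorBasis.orthonormal.1 j, one_mul, hXv]

theorem re_trace_le_re_trace_msqrt {d : ℕ} (X : Matrix (Fin d) (Fin d) ℂ) :
    X.trace.re ≤ (msqrt (Xᴴ * X)).trace.re := by
  have hB := posSemidef_conjTranspose_mul_self X
  rw [hB.1.trace_eq_sum_dotProduct_eigenvectorBasis, trace_msqrt hB, Complex.re_sum,
    Complex.re_sum]
  exact Finset.sum_le_sum fun j _ => by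
    simpa using re_dotProduct_mulVec_eigenvectorBasis_le X j

end TraceInequality

section LowerBound

variable {n : Type*} [Fintype n] [DecidableEq n]

theorem trace_mul_nonneg {A B : Matrix n n ℂ} (hA : 0 ≤ A) (hB : 0 ≤ B) :
    0 ≤ (A * B).trace := by
  rw [← CFC.sqrt_mul_sqrt_self A hA, mul_assoc, trace_mul_comm]
  exact (conjugate_nonneg_of_nonneg hB (CFC.sqrt_nonneg A)).posSemidef.trace_nonneg

theorem sqrt_smul_of_nonneg {c : ℝ} (hc : 0 ≤ c) {A : Matrix n n ℂ} (hA : 0 ≤ A) :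
    CFC.sqrt (c • A) = √c • CFC.sqrt A :=
  CFC.sqrt_unique
    (by rw [smul_mul_smul_comm, Real.mul_self_sqrt hc, CFC.sqrt_mul_sqrt_self A])
    (smul_nonneg (Real.sqrt_nonneg c) (CFC.sqrt_nonneg A))

theorem re_trace_le_sqrt_mul_qFid {d : ℕ} {σ ρ : Matrix (Fin d) (Fin d) ℂ} (hσ : 0 ≤ σ)
    (hρ : 0 ≤ ρ) {c : ℝ} (hc : 0 ≤ c) (hρσ : ρ ≤ c • σ) :
    ρ.trace.re ≤ √c * qFid σ ρ := by
  set s := CFC.sqrt σ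
  set t := CFC.sqrt ρ
  have hts : t ≤ √c • s := sqrt_smul_of_nonneg hc hσ ▸ CFC.sqrt_le_sqrt _ _ hρσ
  have hfid : (t * s).trace.re ≤ qFid σ ρ := by
    have hts_sq : (t * s)ᴴ * (t * s) = s * ρ * s := by
      rw [conjTranspose_mul, (CFC.sqrt_nonneg σ).posSemidef.1.eq,
        (CFC.sqrt_nonneg ρ).posSemidef.1.eq, mul_assoc, ← mul_assoc t, CFC.sqrt_mul_sqrt_self ρ,
        ← mul_assoc]
    rw [qFid, msqrt_eq_sqrt, msqrt_eq_sqrt, ← hts_sq, ← msqrt_eq_sqrt]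
    exact re_trace_le_re_trace_msqrt _
  have hgap := (Complex.le_def.mp (trace_mul_nonneg (sub_nonneg.mpr hts) (CFC.sqrt_nonneg ρ))).1
  rw [sub_mul, trace_sub, smul_mul_assoc, trace_smul, trace_mul_comm s, CFC.sqrt_mul_sqrt_self ρ,
    Complex.sub_re, Complex.real_smul, Complex.re_ofReal_mul] at hgap
  calc ρ.trace.re ≤ √c * (t * s).trace.re := by simpa using hgap
    _ ≤ √c * qFid σ ρ := mul_le_mul_of_nonneg_left hfid (Real.sqrt_nonneg c)

variable {d r : ℕ} {P : Fin r → Matrix (Fin d) (Fin d) ℂ} {ρ : Matrix (Fin d) (Fin d) ℂ}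

theorem measChannel_nonneg (hP : ∀ i, (P i).IsHermitian) (hρ : 0 ≤ ρ) :
    0 ≤ measChannel P ρ :=
  Finset.sum_nonneg fun i _ => (hP i).isSelfAdjoint.conjugate_nonneg hρ

theorem le_smul_measChannel (hP : ∀ i, (P i).IsHermitian) (hsum : ∑ i, P i = 1) (hρ : 0 ≤ ρ) :
    ρ ≤ (r : ℝ) • measChannel P ρ := by
  have hcross : ∑ i, ∑ k, P i * ρ * P k = ρ := by
    simp_rw [← Finset.mul_sum, ← Finset.sum_mul, hsum, one_mul, mul_one]
  have hdiag : ∑ i, ∑ _k : Fin r, P i * ρ * P i = (r : ℝ) • measChannel P ρ := by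
    simp only [Finset.sum_const, Finset.card_univ, Fintype.card_fin, measChannel,
      Finset.smul_sum, Nat.cast_smul_eq_nsmul]
  have hid : ∑ i, ∑ k, (P i - P k) * ρ * (P i - P k) =
      (2 : ℝ) • ((r : ℝ) • measChannel P ρ - ρ) := by
    simp only [sub_mul, mul_sub, Finset.sum_sub_distrib, hcross, hdiag]
    rw [Finset.sum_comm (f := fun i k => P k * ρ * P i), hcross,
      Finset.sum_comm (f := fun _ k => P k * ρ * P k), hdiag, two_smul]
    abel
  have hnonneg : 0 ≤ ∑ i, ∑ k, (P i - P k) * ρ * (P i - P k) :=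
    Finset.sum_nonneg fun i _ => Finset.sum_nonneg fun k _ =>
      ((hP i).sub (hP k)).isSelfAdjoint.conjugate_nonneg hρ
  rw [← sub_nonneg, ← inv_smul_smul₀ (two_ne_zero (α := ℝ)) ((r : ℝ) • measChannel P ρ - ρ),
    ← hid]
  exact smul_nonneg (by norm_num) hnonneg

theorem one_div_le_sq_qFid_measChannel (hP : IsProjObs P) (hρ : IsDensity ρ) :
    1 / (r : ℝ) ≤ qFid (measChannel P ρ) ρ ^ 2 := by
  have h := re_trace_le_sqrt_mul_qFid (measChannel_nonneg hP.1 hρ.1.nonneg) hρ.1.nonneg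
    r.cast_nonneg (le_smul_measChannel hP.1 hP.2.2.2 hρ.1.nonneg)
  rw [hρ.2, Complex.one_re] at h
  exact div_le_of_le_mul₀ r.cast_nonneg (sq_nonneg _) <| by
    nlinarith [Real.sq_sqrt (r.cast_nonneg : (0 : ℝ) ≤ r)]

end LowerBound

section PureState

variable {n : Type*} [Fintype n]

theorem ofReal_re_dotProduct_star_self (v : n → ℂ) :
    (((star v ⬝ᵥ v).re : ℝ) : ℂ) = star v ⬝ᵥ v :=
  Complex.ext rfl (Complex.le_def.mp (dotProduct_star_self_nonneg v)).2

theorem ofReal_sum_normSq_eq_dotProduct (v : n → ℂ) :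
    ((∑ k, Complex.normSq (v k) : ℝ) : ℂ) = star v ⬝ᵥ v := by
  simp [dotProduct, Complex.normSq_eq_conj_mul_self]

theorem exists_dotProduct_star_self_smul_eq_one {y : n → ℂ} (hy : y ≠ 0) :
    ∃ c : ℂ, star (c • y) ⬝ᵥ (c • y) = 1 := by
  set a := (star y ⬝ᵥ y).re
  have ha : 0 < a := (Complex.lt_def.mp (dotProduct_star_self_pos_iff.mpr hy)).1
  refine ⟨((√a)⁻¹ : ℝ), ?_⟩
  rw [star_smul, smul_dotProduct, dotProduct_smul, ← ofReal_re_dotProduct_star_self y]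
  simp only [Complex.star_def, Complex.conj_ofReal, smul_eq_mul, ← Complex.ofReal_mul]
  rw [← mul_assoc, ← mul_inv, Real.mul_self_sqrt ha.le, inv_mul_cancel₀ ha.ne',
    Complex.ofReal_one]

variable {d : ℕ}

theorem trace_proj (v : Fin d → ℂ) : (proj v).trace = star v ⬝ᵥ v := by
  simp [proj, trace, dotProduct, vecMulVec_apply, mul_comm]

theorem proj_nonneg (v : Fin d → ℂ) : 0 ≤ proj v :=
  (posSemidef_vecMulVec_self_star v).nonneg

theorem mul_proj_mul_of_isHermitian {S : Matrix (Fin d) (Fin d) ℂ} (hS : S.IsHermitian)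
    (v : Fin d → ℂ) : S * proj v * S = proj (S *ᵥ v) := by
  rw [proj, proj, mul_vecMulVec, vecMulVec_mul, star_mulVec, hS.eq]

theorem sqrt_proj (v : Fin d → ℂ) :
    CFC.sqrt (proj v) = (√(star v ⬝ᵥ v).re)⁻¹ • proj v := by
  rcases eq_or_ne v 0 with rfl | hv
  · simp [proj]
  set a := (star v ⬝ᵥ v).re
  have ha : 0 < a := (Complex.lt_def.mp (dotProduct_star_self_pos_iff.mpr hv)).1
  have hpp : proj v * proj v = a • proj v := by
    rw [proj, vecMulVec_mul_vecMulVec, vecMulVec_smul, ← ofReal_re_dotProduct_star_self v,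
      Complex.coe_smul]
  refine CFC.sqrt_unique ?_ (smul_nonneg (by positivity) (proj_nonneg v))
  rw [smul_mul_smul_comm, hpp, smul_smul, ← mul_inv, Real.mul_self_sqrt ha.le,
    inv_mul_cancel₀ ha.ne', one_smul]

theorem qFid_proj {σ : Matrix (Fin d) (Fin d) ℂ} (hσ : 0 ≤ σ) (ψ : Fin d → ℂ) :
    qFid σ (proj ψ) = √(star ψ ⬝ᵥ (σ *ᵥ ψ)).re := by
  have hs := (CFC.sqrt_nonneg σ).posSemidef.1
  have hw : star (CFC.sqrt σ *ᵥ ψ) ⬝ᵥ (CFC.sqrt σ *ᵥ ψ) = star ψ ⬝ᵥ (σ *ᵥ ψ) := by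
    rw [star_mulVec, hs.eq, ← dotProduct_mulVec, mulVec_mulVec, CFC.sqrt_mul_sqrt_self σ]
  rw [qFid, msqrt_eq_sqrt, msqrt_eq_sqrt, mul_proj_mul_of_isHermitian hs, sqrt_proj, trace_smul,
    trace_proj, hw, Complex.real_smul, Complex.re_ofReal_mul, inv_mul_eq_div, Real.div_sqrt]

theorem dotProduct_measChannel_proj_mulVec {r : ℕ} (P : Fin r → Matrix (Fin d) (Fin d) ℂ)
    (ψ : Fin d → ℂ) :
    star ψ ⬝ᵥ (measChannel P (proj ψ) *ᵥ ψ) = ∑ i, (star ψ ⬝ᵥ (P i *ᵥ ψ)) ^ 2 := by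
  simp only [measChannel, proj, sum_mulVec, dotProduct_sum, mul_vecMulVec, vecMulVec_mul,
    vecMulVec_mulVec, ← dotProduct_mulVec, op_smul_eq_smul, dotProduct_smul, smul_eq_mul, sq]

end PureState

section BalancedState

variable {n : Type*} [Fintype n]

theorem exists_mulVec_eq_self_of_mul_self_eq [DecidableEq n] {Q : Matrix n n ℂ}
    (hQ : Q * Q = Q) (h0 : Q ≠ 0) : ∃ u : n → ℂ, Q *ᵥ u = u ∧ star u ⬝ᵥ u = 1 := by
  obtain ⟨b, hb⟩ : ∃ b, Q *ᵥ Pi.single b 1 ≠ 0 := by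
    by_contra! h
    exact h0 (Matrix.ext fun a b => by simpa [mulVec_single_one] using congrFun (h b) a)
  obtain ⟨c, hc⟩ := exists_dotProduct_star_self_smul_eq_one hb
  exact ⟨c • Q *ᵥ Pi.single b 1, by rw [mulVec_smul, mulVec_mulVec, hQ], hc⟩

theorem dotProduct_mulVec_eq_of_isHermitian_of_mul_self_eq {Q : Matrix n n ℂ}
    (hQ : Q.IsHermitian) (hQQ : Q * Q = Q) (v : n → ℂ) :
    star v ⬝ᵥ (Q *ᵥ v) = star (Q *ᵥ v) ⬝ᵥ (Q *ᵥ v) := by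
  rw [star_mulVec, hQ.eq, ← dotProduct_mulVec, mulVec_mulVec, hQQ]

theorem IsProjObs.exists_unit_dotProduct_mulVec_eq {d r : ℕ}
    {P : Fin r → Matrix (Fin d) (Fin d) ℂ} (hP : IsProjObs P) (hnz : ∀ i, P i ≠ 0)
    (hr : r ≠ 0) :
    ∃ ψ : Fin d → ℂ, star ψ ⬝ᵥ ψ = 1 ∧ ∀ i, star ψ ⬝ᵥ (P i *ᵥ ψ) = 1 / r := by
  choose u hPu hu using fun i => exists_mulVec_eq_self_of_mul_self_eq (hP.2.1 i) (hnz i)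
  set ψ := (√(r : ℝ))⁻¹ • ∑ j, u j
  have hPψ : ∀ i, P i *ᵥ ψ = (√(r : ℝ))⁻¹ • u i := fun i => by
    rw [mulVec_smul, mulVec_sum, Finset.sum_eq_single i, hPu i]
    · intro j _ hji
      rw [← hPu j, mulVec_mulVec, hP.2.2.1 i j (Ne.symm hji), zero_mulVec]
    · simp
  have hψP : ∀ i, star ψ ⬝ᵥ (P i *ᵥ ψ) = 1 / r := fun i => by
    rw [dotProduct_mulVec_eq_of_isHermitian_of_mul_self_eq (hP.1 i) (hP.2.1 i), hPψ, star_smul,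
      smul_dotProduct, dotProduct_smul, hu, star_trivial, smul_smul, ← mul_inv,
      Real.mul_self_sqrt r.cast_nonneg]
    simp
  refine ⟨ψ, ?_, hψP⟩
  calc star ψ ⬝ᵥ ψ = ∑ i, star ψ ⬝ᵥ (P i *ᵥ ψ) := by
        rw [← dotProduct_sum, ← sum_mulVec, hP.2.2.2, one_mulVec]
    _ = 1 := by simp [hψP, hr]

end BalancedState

theorem stmt_7 {d r : ℕ} (hd : 0 < d)
    (P : Fin r → Matrix (Fin d) (Fin d) ℂ) (hP : IsProjObs P) (hnz : ∀ i, P i ≠ 0) :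
    sSup {x : ℝ | ∃ ρ, IsDensity ρ ∧ x = 1 - (qFid (measChannel P ρ) ρ) ^ 2}
        = 1 - 1 / (r : ℝ) ∧
      ∃ ψ : Fin d → ℂ, (∑ k, Complex.normSq (ψ k)) = 1 ∧
        (∀ i, star ψ ⬝ᵥ (P i *ᵥ ψ) = (1 : ℂ) / (r : ℂ)) ∧
        1 - (qFid (measChannel P (proj ψ)) (proj ψ)) ^ 2 = 1 - 1 / (r : ℝ) := by
  have hr : r ≠ 0 := by
    rintro rfl
    simpa using congrFun (congrFun hP.2.2.2 ⟨0, hd⟩) ⟨0, hd⟩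
  obtain ⟨ψ, hψ, hψP⟩ := hP.exists_unit_dotProduct_mulVec_eq hnz hr
  have hval : 1 - qFid (measChannel P (proj ψ)) (proj ψ) ^ 2 = 1 - 1 / (r : ℝ) := by
    rw [qFid_proj (measChannel_nonneg hP.1 (proj_nonneg ψ)), dotProduct_measChannel_proj_mulVec]
    simp only [hψP, Finset.sum_const, Finset.card_univ, Fintype.card_fin, nsmul_eq_mul]
    rw [show (r : ℂ) * (1 / r) ^ 2 = ((1 / r : ℝ) : ℂ) by push_cast; field_simp,
      Complex.ofReal_re, Real.sq_sqrt (by positivity)]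
  refine ⟨IsGreatest.csSup_eq ⟨⟨proj ψ, ⟨(proj_nonneg ψ).posSemidef, ?_⟩, hval.symm⟩, ?_⟩,
    ψ, ?_, hψP, hval⟩
  · rw [trace_proj, hψ]
  · rintro _ ⟨ρ, hρ, rfl⟩
    linarith [one_div_le_sq_qFid_measChannel hP hρ]
  · exact_mod_cast (ofReal_sum_normSq_eq_dotProduct ψ).trans hψ

end
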